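/- Let C be a BL-chain and let 𝐚 = (a₁, a₂, …) and 𝐛 = (b₁, b₂, …) be good sequences in C. Then the componentwise join (a₁ ∨ b₁, a₂ ∨ b₂, …) and the componentwise meet (a₁ ∧ b₁, a₂ ∧ b₂, …) are again good sequences; consequently the set of good sequences of C, ordered componentwise, is a lattice in which suprema and infima are computed componentwise. -/
import Mathlib


/-- A BL-algebra: a bounded lattice with a commutative monoid operation `mul`
(written ⊗, with unit `⊤` playing the role of 1 and `⊥` the role of 0),
a residuum `imp` (written →), satisfying residuation, divisibility and
prelinearity. -/
class BLAlgebra (L : Type*) extends Lattice L, BoundedOrder L where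
  mul : L → L → L
  imp : L → L → L
  mul_comm : ∀ x y : L, mul x y = mul y x
  mul_assoc : ∀ x y z : L, mul (mul x y) z = mul x (mul y z)
  mul_top : ∀ x : L, mul x ⊤ = x
  residuation : ∀ x y z : L, mul x y ≤ z ↔ x ≤ imp y z
  divisibility : ∀ x y : L, x ⊓ y = mul x (imp x y)
  prelinearity : ∀ x y : L, imp x y ⊔ imp y x = ⊤

namespace BLAlgebra

variable {L : Type*} [BLAlgebra L]

/-- Negation: x̄ := x → 0. -/
def neg (x : L) : L := imp x ⊥

/-- Pseudo-addition: x ⊘ y := x̄ → y. -/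
def oslash (x y : L) : L := imp (neg x) y

/-- Addition: x + y := (x ⊘ y) ∧ (y ⊘ x). -/
def add (x y : L) : L := oslash x y ⊓ oslash y x

end BLAlgebra

open BLAlgebra
/-- A good sequence in a BL-algebra `L` (indexed from 0, so `a 0` is the entry a₁):
aᵢ + aᵢ₊₁ = aᵢ for all i, and aᵣ = 0 for all sufficiently large r. -/
def BLAlgebra.IsGood {L : Type*} [BLAlgebra L] (a : ℕ → L) : Prop :=
  (∀ i, add (a i) (a (i + 1)) = a i) ∧ ∃ n, ∀ r, n < r → a r = ⊥

/-- Sum (under the BL-algebra addition) of a list of elements. -/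
def BLAlgebra.bigAdd {L : Type*} [BLAlgebra L] (l : List L) : L := l.foldr add ⊥

/-- Sum of sequences: cᵢ := aᵢ + (aᵢ₋₁ ⊗ b₁) + ⋯ + (a₁ ⊗ bᵢ₋₁) + bᵢ
(written with 0-based indexing: the entry at index k is
a k + (a (k-1) ⊗ b 0) + ⋯ + (a 0 ⊗ b (k-1)) + b k). -/
def BLAlgebra.seqAdd {L : Type*} [BLAlgebra L] (a b : ℕ → L) : ℕ → L :=
  fun k => bigAdd (a k :: (((List.range k).map fun j => mul (a (k - 1 - j)) (b j)) ++ [b k]))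

namespace BLAlgebra

variable {L : Type*} [BLAlgebra L]

lemma mul_mono_left' {x y : L} (h : x ≤ y) (z : L) : mul x z ≤ mul y z :=
  (residuation x z _).mpr (h.trans ((residuation y z _).mp le_rfl))

lemma mul_le_left' (x y : L) : mul x y ≤ x := by
  rw [mul_comm x y]
  calc mul y x ≤ mul ⊤ x := mul_mono_left' le_top x
    _ = x := by rw [mul_comm, mul_top]

lemma imp_eq_top_of_le' {u x : L} (h : u ≤ x) : imp u x = ⊤ :=
  le_antisymm le_top ((residuation ⊤ u x).mp (by rw [mul_comm, mul_top]; exact h))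

lemma le_imp_self' (u x : L) : x ≤ imp u x :=
  (residuation x u x).mp (mul_le_left' x u)

lemma imp_bot_left' (y : L) : imp ⊥ y = ⊤ :=
  le_antisymm le_top ((residuation ⊤ ⊥ y).mp
    (by rw [mul_comm, mul_top]; exact bot_le))

lemma imp_top_left' (x : L) : imp ⊤ x = x := by
  refine le_antisymm ?_ (le_imp_self' ⊤ x)
  have := (residuation (imp ⊤ x) ⊤ x).mpr le_rfl
  rwa [mul_top] at this

lemma mul_bot' (x : L) : mul ⊥ x = ⊥ :=
  le_antisymm ((residuation ⊥ x ⊥).mpr bot_le) bot_le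

lemma mul_neg_self' (x : L) : mul x (neg x) = ⊥ := by
  rw [neg, ← divisibility, inf_bot_eq]

lemma imp_mono_right' (u : L) {c d : L} (h : c ≤ d) : imp u c ≤ imp u d :=
  (residuation _ _ _).mp (((residuation (imp u c) u c).mpr le_rfl).trans h)

lemma imp_curry' (a b c : L) : imp a (imp b c) = imp (mul a b) c := by
  apply le_antisymm
  · apply (residuation _ _ _).mp
    have h1 : mul (imp a (imp b c)) a ≤ imp b c := (residuation _ _ _).mpr le_rfl
    have h2 : mul (mul (imp a (imp b c)) a) b ≤ c := (residuation _ _ _).mpr h1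
    rwa [mul_assoc] at h2
  · apply (residuation _ _ _).mp
    apply (residuation _ _ _).mp
    have h1 : mul (imp (mul a b) c) (mul a b) ≤ c := (residuation _ _ _).mpr le_rfl
    rwa [← mul_assoc] at h1

lemma add_eq_left_iff' (htot : ∀ x y : L, x ≤ y ∨ y ≤ x) (x y : L) :
    add x y = x ↔ x = ⊤ ∨ y = ⊥ := by
  constructor
  · intro h
    by_cases hx : x = ⊤
    · exact Or.inl hx
    right
    rw [add] at h
    rcases htot (oslash x y) (oslash y x) with hle | hle
    · -- Case A : imp (neg x) y = x
      have hxy : imp (neg x) y = x := by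
        have := (inf_eq_left.mpr hle).symm.trans h
        rwa [oslash] at this
      have hdiv : neg x ⊓ y = ⊥ := by
        rw [divisibility, hxy, mul_comm, mul_neg_self']
      rcases htot (neg x) y with h2 | h2
      · exfalso
        apply hx
        have hnx : neg x = ⊥ := by rw [← inf_eq_left.mpr h2, hdiv]
        rw [← hxy, hnx, imp_bot_left']
      · exact le_bot_iff.mp (by rw [← hdiv]; exact le_inf h2 le_rfl)
    · -- Case B : imp (neg y) x = x
      have hux : imp (neg y) x = x := by
        have := (inf_eq_right.mpr hle).symm.trans h
        rwa [oslash] at this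
      set u := neg y with hu
      rcases htot u x with h2 | h2
      · exact absurd (by rw [← hux, imp_eq_top_of_le' h2]) hx
      · -- x ≤ u
        have hmulux : mul u x = x := by
          have := divisibility u x
          rw [hux, inf_eq_right.mpr h2] at this
          exact this.symm
        have hvx : neg u ≤ x := by
          have := imp_mono_right' u (bot_le : (⊥ : L) ≤ x)
          rw [hux] at this
          exact this
        have hyv : y ≤ neg u := (residuation y u ⊥).mp (by rw [hu]; exact (mul_neg_self' y).le)
        suffices hv : neg u = ⊥ by exact le_bot_iff.mp (hyv.trans_eq hv)
        have hn : imp u (neg x) = neg x := by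
          rw [neg, imp_curry', hmulux]
        rcases htot u (neg x) with h3 | h3
        · have hnx : neg x = ⊤ := by rw [← hn, imp_eq_top_of_le' h3]
          have hxbot : x = ⊥ := le_bot_iff.mp (by
            have := (residuation ⊤ x ⊥).mpr (hnx ▸ le_rfl)
            rwa [mul_comm, mul_top] at this)
          exact le_bot_iff.mp (hvx.trans hxbot.le)
        · -- neg x ≤ u
          have hmulnu : mul u (neg x) = neg x := by
            have := divisibility u (neg x)
            rw [hn, inf_eq_right.mpr h3] at this
            exact this.symm
          have hvn : neg u ≤ neg x := by
            apply (residuation _ _ _).mp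
            calc mul (neg u) x = mul (neg u) (mul u x) := by rw [hmulux]
              _ = mul (mul (neg u) u) x := by rw [mul_assoc]
              _ = mul (mul u (neg u)) x := by rw [mul_comm (neg u) u]
              _ = mul ⊥ x := by rw [mul_neg_self']
              _ ≤ ⊥ := (mul_bot' x).le
          have hkey : imp (neg x) (neg u) = neg (neg x) := by
            rw [show neg u = imp u ⊥ from rfl, imp_curry', mul_comm, hmulnu]
            rfl
          have hfin : neg x ⊓ neg u = ⊥ := by
            rw [divisibility, hkey, mul_neg_self']
          rw [← hfin, inf_eq_right.mpr hvn]
  · rintro (rfl | rfl)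
    · rw [add, oslash, oslash, show neg (⊤ : L) = ⊥ by rw [neg, imp_top_left'],
        imp_bot_left', imp_eq_top_of_le' (le_top), top_inf_eq]
    · rw [add, oslash, oslash, show neg (⊥ : L) = ⊤ from imp_eq_top_of_le' le_rfl,
        imp_top_left']
      exact inf_eq_right.mpr ((residuation x (neg x) ⊥).mp (mul_neg_self' x).le)

end BLAlgebra

/-- In a BL-chain, the componentwise join and meet of two good
sequences are good; consequently, with respect to the componentwise order, they
are respectively the supremum and infimum of the two good sequences. -/
theorem good_seqs_lattice_chain {L : Type*} [BLAlgebra L]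
    (htot : ∀ x y : L, x ≤ y ∨ y ≤ x) (a b : ℕ → L)
    (ha : IsGood a) (hb : IsGood b) :
    IsGood (fun i => a i ⊔ b i) ∧
    IsGood (fun i => a i ⊓ b i) ∧
    (∀ c : ℕ → L, IsGood c →
      (((∀ i, a i ≤ c i) ∧ (∀ i, b i ≤ c i)) ↔ (∀ i, a i ⊔ b i ≤ c i))) ∧
    (∀ c : ℕ → L, IsGood c →
      (((∀ i, c i ≤ a i) ∧ (∀ i, c i ≤ b i)) ↔ (∀ i, c i ≤ a i ⊓ b i))) := by
  obtain ⟨hag, na, hna⟩ := ha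
  obtain ⟨hbg, nb, hnb⟩ := hb
  have Ha : ∀ i, a i = ⊤ ∨ a (i + 1) = ⊥ :=
    fun i => (add_eq_left_iff' htot _ _).mp (hag i)
  have Hb : ∀ i, b i = ⊤ ∨ b (i + 1) = ⊥ :=
    fun i => (add_eq_left_iff' htot _ _).mp (hbg i)
  refine ⟨⟨fun i => (add_eq_left_iff' htot _ _).mpr ?_, max na nb, fun r hr => ?_⟩,
          ⟨fun i => (add_eq_left_iff' htot _ _).mpr ?_, max na nb, fun r hr => ?_⟩,
          ?_, ?_⟩
  · rcases Ha i with h1 | h1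
    · exact Or.inl (by simp [h1])
    · rcases Hb i with h2 | h2
      · exact Or.inl (by simp [h2])
      · exact Or.inr (by simp [h1, h2])
  · simp [hna r (lt_of_le_of_lt (le_max_left _ _) hr),
      hnb r (lt_of_le_of_lt (le_max_right _ _) hr)]
  · rcases Ha i with h1 | h1
    · rcases Hb i with h2 | h2
      · exact Or.inl (by simp [h1, h2])
      · exact Or.inr (by simp [h2])
    · exact Or.inr (by simp [h1])
  · simp [hna r (lt_of_le_of_lt (le_max_left _ _) hr),
      hnb r (lt_of_le_of_lt (le_max_right _ _) hr)]
  · intro c _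
    exact ⟨fun ⟨h1, h2⟩ i => sup_le (h1 i) (h2 i),
           fun h => ⟨fun i => le_sup_left.trans (h i), fun i => le_sup_right.trans (h i)⟩⟩
  · intro c _
    exact ⟨fun ⟨h1, h2⟩ i => le_inf (h1 i) (h2 i),
           fun h => ⟨fun i => (h i).trans inf_le_left, fun i => (h i).trans inf_le_right⟩⟩
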